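/- arXiv:2107.04839 — 5 statements merged into one kernel-verified Lean document; each statement's English description precedes it below -/
import Mathlib

section
/- Consider the hazard model λ(t; a, x) = λ₀(t)·exp[μ₀(x) + 1{t ≥ a}·Q(a − d₀(x))·H₀(x)] with λ₀ ≥ 0, H₀ ≥ 0, and assume Q(u) ≥ Q(0) for all u ∈ ℝ. Let f_X : ℝ^q → [0, ∞) be measurable and integrable, and for a measurable treatment-initiation regime d : ℝ^q → [0, a₀] define the value V(d) = ∫_{ℝ^q} ∫_{a₀}^{τ} exp( − ∫_{a₀}^{t} λ(u; d(x), x) du ) f_X(x) dt dx. Then V(d) ≤ V(d₀) for every measurable d : ℝ^q → [0, a₀]; i.e., d₀ maximizes the value function based on restricted mean residual lifetime. -/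
open MeasureTheory Set Real

/-!
A regime initiating treatment by time `a₀` has already started it on the whole window `[a₀, τ]`
of the value function, so there the hazard of `d` is the baseline hazard times the constant
`exp (μ₀ x + Q (d x - d₀ x) H₀ x)`. The restricted mean residual lifetime
`c ↦ ∫_{a₀}^{τ} exp (-c Λ(t))`, with `Λ` the cumulative baseline hazard, is antitone in that
proportionality constant, which `Q (·) ≥ Q 0` and `H₀ ≥ 0` make smallest at `d = d₀`.
-/

section

variable {f : ℝ → ℝ} {a b : ℝ}

theorem integral_mul_exp_add_ite_of_le {e : ℝ} (m k : ℝ) (hea : e ≤ a) (heb : e ≤ b) :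
    ∫ u in a..b, f u * exp (m + if e ≤ u then k else 0) = exp (m + k) * ∫ u in a..b, f u := by
  rw [← intervalIntegral.integral_const_mul]
  refine intervalIntegral.integral_congr fun u hu => ?_
  rw [if_pos ((le_min hea heb).trans hu.1), mul_comm]

theorem intervalIntegrable_exp_neg_mul_primitive (hf : IntervalIntegrable f volume a b)
    (c : ℝ) : IntervalIntegrable (fun t => exp (-(c * ∫ u in a..t, f u))) volume a b :=
  ContinuousOn.intervalIntegrable <| continuous_exp.comp_continuousOn
    (continuousOn_const.mul
      (intervalIntegral.continuousOn_primitive_interval' hf left_mem_uIcc)).neg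

theorem antitone_integral_exp_neg_mul_primitive (hab : a ≤ b)
    (hf : IntervalIntegrable f volume a b) (hf₀ : ∀ u ∈ Icc a b, 0 ≤ f u) :
    Antitone fun c => ∫ t in a..b, exp (-(c * ∫ u in a..t, f u)) := by
  intro c c' hcc'
  refine intervalIntegral.integral_mono_on hab (intervalIntegrable_exp_neg_mul_primitive hf c')
    (intervalIntegrable_exp_neg_mul_primitive hf c) fun t ht => ?_
  have hΛ : 0 ≤ ∫ u in a..t, f u :=
    intervalIntegral.integral_nonneg ht.1 fun u hu => hf₀ u ⟨hu.1, hu.2.trans ht.2⟩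
  gcongr

theorem integral_exp_neg_mul_primitive_mem_Icc (hab : a ≤ b)
    (hf : IntervalIntegrable f volume a b) (hf₀ : ∀ u ∈ Icc a b, 0 ≤ f u) {c : ℝ}
    (hc : 0 ≤ c) : ∫ t in a..b, exp (-(c * ∫ u in a..t, f u)) ∈ Icc 0 (b - a) := by
  refine ⟨intervalIntegral.integral_nonneg hab fun t _ => (exp_pos _).le, ?_⟩
  simpa using antitone_integral_exp_neg_mul_primitive hab hf hf₀ hc

end

theorem stmt_1_general (q : ℕ) (τ a₀ : ℝ) (ha₀ : 0 ≤ a₀) (hτ : a₀ ≤ τ)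
    (lam0 : ℝ → ℝ) (hlam_nonneg : ∀ u, 0 ≤ lam0 u)
    (hlam_int : IntervalIntegrable lam0 volume 0 τ)
    (μ0 H0 d0 : (Fin q → ℝ) → ℝ)
    (hμ0 : Measurable μ0) (hH0 : Measurable H0) (hH0_nonneg : ∀ x, 0 ≤ H0 x)
    (hd0_range : ∀ x, d0 x ∈ Set.Icc 0 a₀)
    (Q : ℝ → ℝ) (hQ : ∀ u, Q 0 ≤ Q u)
    (fX : (Fin q → ℝ) → ℝ) (hfX_nonneg : ∀ x, 0 ≤ fX x)
    (hfX_int : Integrable fX)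
    (d : (Fin q → ℝ) → ℝ) (hd_range : ∀ x, d x ∈ Set.Icc 0 a₀) :
    (∫ x : Fin q → ℝ,
        (∫ t in a₀..τ, Real.exp (- ∫ u in a₀..t,
            lam0 u * Real.exp (μ0 x + (if d x ≤ u then Q (d x - d0 x) * H0 x else 0))))
          * fX x)
      ≤ ∫ x : Fin q → ℝ,
          (∫ t in a₀..τ, Real.exp (- ∫ u in a₀..t,
              lam0 u * Real.exp (μ0 x + (if d0 x ≤ u then Q (d0 x - d0 x) * H0 x else 0))))
            * fX x := by
  set V : ℝ → ℝ := fun c => ∫ t in a₀..τ, exp (-(c * ∫ u in a₀..t, lam0 u))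
  have hlam : IntervalIntegrable lam0 volume a₀ τ :=
    hlam_int.mono_set (uIcc_subset_uIcc (mem_uIcc_of_le ha₀ hτ) right_mem_uIcc)
  have hV : Antitone V :=
    antitone_integral_exp_neg_mul_primitive hτ hlam fun u _ => hlam_nonneg u
  have hV_eq : ∀ (e : (Fin q → ℝ) → ℝ), (∀ x, e x ∈ Icc 0 a₀) → ∀ x,
      ∫ t in a₀..τ, exp (-∫ u in a₀..t,
        lam0 u * exp (μ0 x + if e x ≤ u then Q (e x - d0 x) * H0 x else 0))
        = V (exp (μ0 x + Q (e x - d0 x) * H0 x)) := fun e he x =>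
    intervalIntegral.integral_congr fun t ht => by
      rw [integral_mul_exp_add_ite_of_le _ _ (he x).2 ((he x).2.trans (uIcc_of_le hτ ▸ ht).1)]
  simp only [hV_eq d hd_range, hV_eq d0 hd0_range]
  simp only [sub_self]
  have hV_bound : ∀ x, ‖V (exp (μ0 x + Q 0 * H0 x))‖ ≤ τ - a₀ := fun x => by
    obtain ⟨h₀, h₁⟩ := integral_exp_neg_mul_primitive_mem_Icc hτ hlam
      (fun u _ => hlam_nonneg u) (exp_pos (μ0 x + Q 0 * H0 x)).le
    rwa [Real.norm_of_nonneg h₀]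
  -- `V` is antitone, hence measurable: no joint measurability in `(x, t)` is needed.
  refine integral_mono_of_nonneg (ae_of_all _ fun x => ?_)
    (hfX_int.bdd_mul (hV.measurable.comp (hμ0.add (hH0.const_mul _)).exp).aestronglyMeasurable
      (ae_of_all _ hV_bound)) (ae_of_all _ fun x => ?_)
  · exact mul_nonneg (integral_exp_neg_mul_primitive_mem_Icc hτ hlam
      (fun u _ => hlam_nonneg u) (exp_pos _).le).1 (hfX_nonneg x)
  · refine mul_le_mul_of_nonneg_right (hV (exp_le_exp.mpr ?_)) (hfX_nonneg x)
    gcongr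
    exacts [hH0_nonneg x, hQ _]

/-- Under the hazard model
`λ(t; a, x) = λ₀(t) · exp(μ₀(x) + 1{t ≥ a} · Q(a − d₀(x)) · H₀(x))`
with `λ₀ ≥ 0`, `H₀ ≥ 0` and `Q(u) ≥ Q(0)` for all `u`, the regime `d₀`
maximizes the value function based on restricted mean residual lifetime
`V(d) = ∫∫_{a₀}^{τ} exp(−∫_{a₀}^{t} λ(u; d(x), x) du) f_X(x) dt dx`:
for every measurable regime `d : ℝ^q → [0, a₀]`, `V(d) ≤ V(d₀)`. -/
theorem stmt_1 (q : ℕ) (τ a₀ : ℝ) (ha₀ : 0 ≤ a₀) (hτ : a₀ ≤ τ)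
    (lam0 : ℝ → ℝ) (hlam_meas : Measurable lam0) (hlam_nonneg : ∀ u, 0 ≤ lam0 u)
    (hlam_int : IntervalIntegrable lam0 volume 0 τ)
    (μ0 H0 d0 : (Fin q → ℝ) → ℝ)
    (hμ0 : Measurable μ0) (hH0 : Measurable H0) (hH0_nonneg : ∀ x, 0 ≤ H0 x)
    (hd0 : Measurable d0) (hd0_range : ∀ x, d0 x ∈ Set.Icc 0 a₀)
    (Q : ℝ → ℝ) (hQmeas : Measurable Q) (hQ : ∀ u, Q 0 ≤ Q u)
    (fX : (Fin q → ℝ) → ℝ) (hfX : Measurable fX) (hfX_nonneg : ∀ x, 0 ≤ fX x)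
    (hfX_int : Integrable fX)
    (d : (Fin q → ℝ) → ℝ) (hd : Measurable d) (hd_range : ∀ x, d x ∈ Set.Icc 0 a₀) :
    (∫ x : Fin q → ℝ,
        (∫ t in a₀..τ, Real.exp (- ∫ u in a₀..t,
            lam0 u * Real.exp (μ0 x + (if d x ≤ u then Q (d x - d0 x) * H0 x else 0))))
          * fX x)
      ≤ ∫ x : Fin q → ℝ,
          (∫ t in a₀..τ, Real.exp (- ∫ u in a₀..t,
              lam0 u * Real.exp (μ0 x + (if d0 x ≤ u then Q (d0 x - d0 x) * H0 x else 0))))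
            * fX x :=
  stmt_1_general q τ a₀ ha₀ hτ lam0 hlam_nonneg hlam_int μ0 H0 d0 hμ0 hH0 hH0_nonneg hd0_range Q hQ
    fX hfX_nonneg hfX_int d hd_range
end

section
/- Consider the hazard model λ(t; a, x) = λ₀(t)·exp[μ₀(x) + 1{t ≥ a}·Q(a − d₀(x))·H₀(x)] with λ₀ continuous on [0, τ] and Q differentiable satisfying Q(u) ≥ Q(0) for all u and Q(0) < 0. Fix x with H₀(x) > 0 and t₀ with 0 ≤ t₀ < d₀(x) < τ, and assume λ₀(d₀(x)) > 0. Define the restricted mean residual lifetime m_{t₀}(a) = ∫_{t₀}^{τ} exp{ −Λ(t; a, x) + Λ(t₀; a, x) } dt for a ∈ (t₀, τ). Then m_{t₀} is differentiable at a = d₀(x) with m_{t₀}'(d₀(x)) = −λ₀(d₀(x))·exp{μ₀(x)}·(1 − exp{Q(0)·H₀(x)})·∫_{d₀(x)}^{τ} exp{ −Λ(t; d₀(x), x) + Λ(t₀; d₀(x), x) } dt, and this derivative is strictly negative. -/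
open MeasureTheory

/-- Cumulative hazard `Λ(t; a, x) = ∫₀ᵗ λ₀(u)·exp(μ₀(x) + 1{u ≥ a}·Q(a − d₀(x))·H₀(x)) du`. -/
noncomputable def cumHaz {𝒳 : Type*} (lam0 : ℝ → ℝ) (μ0 H0 d0 : 𝒳 → ℝ) (Q : ℝ → ℝ)
    (x : 𝒳) (a t : ℝ) : ℝ :=
  ∫ u in (0:ℝ)..t, lam0 u * Real.exp (μ0 x + (if a ≤ u then Q (a - d0 x) * H0 x else 0))

open intervalIntegral Topology Filter


-- integrability of the hazard integrand
lemma haz_integrable {lam0 : ℝ → ℝ} (hlam : Continuous lam0) (hnn : ∀ u, 0 ≤ lam0 u)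
    (M' c a p q : ℝ) :
    IntervalIntegrable (fun u => lam0 u * Real.exp (M' + (if a ≤ u then c else 0)))
      volume p q := by
  have hg : IntervalIntegrable (fun u => lam0 u * Real.exp (M' + |c|)) volume p q :=
    (hlam.mul continuous_const).intervalIntegrable p q
  refine hg.mono_fun ?_ ?_
  · exact ((hlam.aestronglyMeasurable).mul
      ((measurable_const.add ((measurable_const.ite measurableSet_Ici
        measurable_const))).exp.aestronglyMeasurable)).restrict
  · refine Filter.Eventually.of_forall (fun u => ?_)
    have h1 : (0:ℝ) ≤ lam0 u := hnn u
    have h2 : Real.exp (M' + (if a ≤ u then c else 0)) ≤ Real.exp (M' + |c|) := by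
      apply Real.exp_le_exp.2
      have : (if a ≤ u then c else 0) ≤ |c| := by
        split <;> [exact le_abs_self c; positivity]
      linarith
    simp only [Real.norm_eq_abs, abs_mul, abs_of_nonneg h1, Real.abs_exp]
    exact mul_le_mul_of_nonneg_left h2 h1

lemma ae_ne (a : ℝ) : ∀ᵐ u : ℝ, u ≠ a := by
  simp [ae_iff, Set.setOf_eq_eq_singleton', Real.volume_singleton]

lemma cumHaz_of_le {𝒳 : Type*} (lam0 : ℝ → ℝ) (μ0 H0 d0 : 𝒳 → ℝ) (Q : ℝ → ℝ) (x : 𝒳)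
    {a t : ℝ} (ht : 0 ≤ t) (hta : t ≤ a) :
    cumHaz lam0 μ0 H0 d0 Q x a t = Real.exp (μ0 x) * ∫ u in (0:ℝ)..t, lam0 u := by
  rw [cumHaz]
  have : (∫ u in (0:ℝ)..t,
      lam0 u * Real.exp (μ0 x + (if a ≤ u then Q (a - d0 x) * H0 x else 0)))
      = ∫ u in (0:ℝ)..t, lam0 u * Real.exp (μ0 x) := by
    apply intervalIntegral.integral_congr_ae
    filter_upwards [ae_ne a] with u hu hmem
    rw [Set.uIoc_of_le ht] at hmem
    have : ¬ (a ≤ u) := by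
      rcases lt_or_eq_of_le (hmem.2.trans hta) with h | h
      · exact not_le.2 h
      · exact absurd h hu
    simp [this]
  rw [this, intervalIntegral.integral_mul_const, mul_comm]

lemma cumHaz_of_ge {𝒳 : Type*} {lam0 : ℝ → ℝ} (hlam : Continuous lam0)
    (hnn : ∀ u, 0 ≤ lam0 u) (μ0 H0 d0 : 𝒳 → ℝ) (Q : ℝ → ℝ) (x : 𝒳)
    {a t : ℝ} (ha : 0 ≤ a) (hat : a ≤ t) :
    cumHaz lam0 μ0 H0 d0 Q x a t = Real.exp (μ0 x) * (∫ u in (0:ℝ)..a, lam0 u)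
      + Real.exp (μ0 x) * Real.exp (Q (a - d0 x) * H0 x)
        * ((∫ u in (0:ℝ)..t, lam0 u) - ∫ u in (0:ℝ)..a, lam0 u) := by
  have hint := haz_integrable hlam hnn (μ0 x) (Q (a - d0 x) * H0 x) a
  rw [cumHaz, ← integral_add_adjacent_intervals (hint 0 a) (hint a t)]
  have h1 : (∫ u in (0:ℝ)..a,
      lam0 u * Real.exp (μ0 x + (if a ≤ u then Q (a - d0 x) * H0 x else 0)))
      = Real.exp (μ0 x) * ∫ u in (0:ℝ)..a, lam0 u := by
    have : (∫ u in (0:ℝ)..a,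
        lam0 u * Real.exp (μ0 x + (if a ≤ u then Q (a - d0 x) * H0 x else 0)))
        = ∫ u in (0:ℝ)..a, lam0 u * Real.exp (μ0 x) := by
      apply intervalIntegral.integral_congr_ae
      filter_upwards [ae_ne a] with u hu hmem
      rw [Set.uIoc_of_le ha] at hmem
      have : ¬ (a ≤ u) := fun h => hu (le_antisymm hmem.2 h)
      simp [this]
    rw [this, intervalIntegral.integral_mul_const, mul_comm]
  have h2 : (∫ u in a..t,
      lam0 u * Real.exp (μ0 x + (if a ≤ u then Q (a - d0 x) * H0 x else 0)))
      = Real.exp (μ0 x) * Real.exp (Q (a - d0 x) * H0 x)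
        * ((∫ u in (0:ℝ)..t, lam0 u) - ∫ u in (0:ℝ)..a, lam0 u) := by
    have : (∫ u in a..t,
        lam0 u * Real.exp (μ0 x + (if a ≤ u then Q (a - d0 x) * H0 x else 0)))
        = ∫ u in a..t, lam0 u * (Real.exp (μ0 x) * Real.exp (Q (a - d0 x) * H0 x)) := by
      apply integral_congr
      intro u hmem
      rw [Set.uIcc_of_le hat] at hmem
      simp [hmem.1, ← Real.exp_add]
    rw [this, intervalIntegral.integral_mul_const,
      integral_interval_sub_left ((hlam.intervalIntegrable 0 t))
        ((hlam.intervalIntegrable 0 a))]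
    ring
  rw [h1, h2]

/-- differentiability in `s` of `s ↦ ∫_{D}^{τ} exp(-s * L t) dt`. -/
lemma hasDerivAt_J {L : ℝ → ℝ} (hL : Continuous L) (D τ s₀ : ℝ) :
    HasDerivAt (fun s => ∫ t in D..τ, Real.exp (-s * L t))
      (∫ t in D..τ, -L t * Real.exp (-s₀ * L t)) s₀ := by
  obtain ⟨K₀, hK₀⟩ := (isCompact_uIcc (a := D) (b := τ)).exists_bound_of_continuousOn
    hL.continuousOn
  set K : ℝ := max K₀ 0 with hK
  have hKnn : 0 ≤ K := le_max_right _ _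
  have hKb : ∀ t ∈ Set.uIcc D τ, |L t| ≤ K := fun t ht => (hK₀ t ht).trans (le_max_left _ _)
  have main := intervalIntegral.hasDerivAt_integral_of_dominated_loc_of_deriv_le
    (F := fun s t => Real.exp (-s * L t)) (F' := fun s t => -L t * Real.exp (-s * L t))
    (x₀ := s₀) (a := D) (b := τ) (μ := volume)
    (bound := fun _ => K * Real.exp ((|s₀| + 1) * K)) (Metric.ball_mem_nhds s₀ one_pos)
    (Filter.Eventually.of_forall fun s =>
      (Continuous.aestronglyMeasurable (by fun_prop)).restrict)
    (Continuous.intervalIntegrable (by fun_prop) D τ)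
    ((Continuous.aestronglyMeasurable (by fun_prop)).restrict)
    ?_ (intervalIntegrable_const) ?_
  · exact main.2
  · refine Filter.Eventually.of_forall fun t ht s hs => ?_
    have hLt : |L t| ≤ K := hKb t (Set.uIoc_subset_uIcc ht)
    have hs' : |s| ≤ |s₀| + 1 := by
      have := mem_ball_iff_norm.1 hs
      have h2 : |s - s₀| < 1 := by simpa [Real.norm_eq_abs] using this
      calc |s| = |s₀ + (s - s₀)| := by ring_nf
        _ ≤ |s₀| + |s - s₀| := abs_add_le _ _
        _ ≤ |s₀| + 1 := by linarith
    have hexp : Real.exp (-s * L t) ≤ Real.exp ((|s₀| + 1) * K) := by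
      apply Real.exp_le_exp.2
      calc -s * L t ≤ |(-s) * L t| := le_abs_self _
        _ = |s| * |L t| := by rw [abs_mul, abs_neg]
        _ ≤ (|s₀| + 1) * K := by
            apply mul_le_mul hs' hLt (abs_nonneg _) (by positivity)
    calc ‖-L t * Real.exp (-s * L t)‖ = |L t| * Real.exp (-s * L t) := by
          rw [norm_mul, Real.norm_eq_abs, Real.norm_eq_abs, abs_neg,
            Real.abs_exp]
      _ ≤ K * Real.exp ((|s₀| + 1) * K) := by
          apply mul_le_mul hLt hexp (Real.exp_nonneg _) hKnn
  · refine Filter.Eventually.of_forall fun t ht s hs => ?_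
    have h1 : HasDerivAt (fun s : ℝ => -s * L t) (-L t) s := by
      simpa using ((hasDerivAt_id s).neg.mul_const (L t))
    have := h1.exp
    simpa [mul_comm] using this

/-- The moving-endpoint remainder term has derivative 0. -/
lemma hasDerivAt_R {L A B : ℝ → ℝ} {D : ℝ} (hL : Continuous L)
    (hA : ContinuousAt A D) (hB : ContinuousAt B D) :
    HasDerivAt (fun a => ∫ t in D..a,
      (A a * Real.exp (-(B a) * L t) - A D * Real.exp (-(B D) * L t))) 0 D := by
  obtain ⟨K₀, hK₀⟩ := (isCompact_Icc (a := D - 1) (b := D + 1)).exists_bound_of_continuousOn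
    hL.continuousOn
  set K : ℝ := max K₀ 0 with hKdef
  have hKnn : 0 ≤ K := le_max_right _ _
  have hKb : ∀ t ∈ Set.Icc (D - 1) (D + 1), |L t| ≤ K :=
    fun t ht => (hK₀ t ht).trans (le_max_left _ _)
  set K₂ : ℝ := |B D| + 1 with hK₂def
  set c₁ : ℝ := Real.exp (K₂ * K) with hc₁def
  set c₂ : ℝ := |A D| * Real.exp (K₂ * K) * (2 * K) with hc₂def
  have hc₁pos : 0 < c₁ := Real.exp_pos _
  have hc₂nn : 0 ≤ c₂ := by positivity
  rw [hasDerivAt_iff_isLittleO]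
  simp only [intervalIntegral.integral_same, sub_zero, smul_zero, sub_zero]
  rw [Asymptotics.isLittleO_iff]
  intro c hc
  have hAev : ∀ᶠ a in 𝓝 D, |A a - A D| < c / (2 * c₁) := by
    have := Metric.continuousAt_iff.1 hA (c / (2 * c₁)) (by positivity)
    obtain ⟨δ, hδ, hδ'⟩ := this
    filter_upwards [Metric.ball_mem_nhds D hδ] with a ha
    simpa [Real.dist_eq] using hδ' ha
  have hBev : ∀ᶠ a in 𝓝 D,
      |B a - B D| < min (min 1 (1 / (K + 1))) (c / (2 * (c₂ + 1))) := by
    have := Metric.continuousAt_iff.1 hB (min (min 1 (1 / (K + 1))) (c / (2 * (c₂ + 1))))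
      (by positivity)
    obtain ⟨δ, hδ, hδ'⟩ := this
    filter_upwards [Metric.ball_mem_nhds D hδ] with a ha
    simpa [Real.dist_eq] using hδ' ha
  have hDist : ∀ᶠ a in 𝓝 D, |a - D| ≤ 1 := by
    filter_upwards [Metric.ball_mem_nhds D one_pos] with a ha
    exact le_of_lt (by simpa [Real.dist_eq] using ha)
  filter_upwards [hAev, hBev, hDist] with a hAa hBa hda
  -- pointwise bound on the integrand for t ∈ Ι D a
  have hsub : Set.uIoc D a ⊆ Set.Icc (D - 1) (D + 1) := by
    intro t ht
    rcases ht with ⟨h1, h2⟩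
    rcases abs_le.1 hda with ⟨hd1, hd2⟩
    constructor
    · have : min D a ≥ D - 1 := le_min (by linarith) (by linarith)
      linarith [this.trans (le_of_lt h1)]
    · have : max D a ≤ D + 1 := max_le (by linarith) (by linarith)
      linarith [h2.trans this]
  have hbound : ∀ t ∈ Set.uIoc D a,
      ‖A a * Real.exp (-(B a) * L t) - A D * Real.exp (-(B D) * L t)‖
        ≤ c₁ * |A a - A D| + c₂ * |B a - B D| := by
    intro t ht
    have hLt : |L t| ≤ K := hKb t (hsub ht)
    have hBa1 : |B a - B D| ≤ 1 := le_of_lt (lt_of_lt_of_le hBa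
      ((min_le_left _ _).trans (min_le_left _ _)))
    have hBaK : |B a - B D| ≤ 1 / (K + 1) := le_of_lt (lt_of_lt_of_le hBa
      ((min_le_left _ _).trans (min_le_right _ _)))
    have hBabs : |B a| ≤ K₂ := by
      calc |B a| = |B D + (B a - B D)| := by ring_nf
        _ ≤ |B D| + |B a - B D| := abs_add_le _ _
        _ ≤ |B D| + 1 := by linarith
    have hexpa : Real.exp (-(B a) * L t) ≤ Real.exp (K₂ * K) := by
      apply Real.exp_le_exp.2
      calc -(B a) * L t ≤ |(-(B a)) * L t| := le_abs_self _
        _ = |B a| * |L t| := by rw [abs_mul, abs_neg]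
        _ ≤ K₂ * K := mul_le_mul hBabs hLt (abs_nonneg _) (by positivity)
    have hexpD : Real.exp (-(B D) * L t) ≤ Real.exp (K₂ * K) := by
      apply Real.exp_le_exp.2
      calc -(B D) * L t ≤ |(-(B D)) * L t| := le_abs_self _
        _ = |B D| * |L t| := by rw [abs_mul, abs_neg]
        _ ≤ K₂ * K := mul_le_mul (by simp [hK₂def]) hLt (abs_nonneg _) (by positivity)
    have key : A a * Real.exp (-(B a) * L t) - A D * Real.exp (-(B D) * L t)
        = (A a - A D) * Real.exp (-(B a) * L t)
          + A D * (Real.exp (-(B a) * L t) - Real.exp (-(B D) * L t)) := by ring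
    have hdiffexp : |Real.exp (-(B a) * L t) - Real.exp (-(B D) * L t)|
        ≤ Real.exp (K₂ * K) * (2 * K) * |B a - B D| := by
      have factor : Real.exp (-(B a) * L t) - Real.exp (-(B D) * L t)
          = Real.exp (-(B D) * L t) * (Real.exp ((B D - B a) * L t) - 1) := by
        rw [mul_sub, ← Real.exp_add, mul_one]; ring_nf
      have harg : |(B D - B a) * L t| ≤ 1 := by
        rw [abs_mul]
        have h1 : |B D - B a| = |B a - B D| := abs_sub_comm _ _
        rw [h1]
        calc |B a - B D| * |L t| ≤ (1 / (K + 1)) * (K + 1) :=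
              mul_le_mul hBaK (by linarith) (abs_nonneg _) (by positivity)
          _ = 1 := by field_simp
      have h2 := Real.abs_exp_sub_one_le harg
      rw [factor, abs_mul, Real.abs_exp]
      calc Real.exp (-(B D) * L t) * |Real.exp ((B D - B a) * L t) - 1|
          ≤ Real.exp (K₂ * K) * (2 * |(B D - B a) * L t|) := by
            apply mul_le_mul hexpD h2 (abs_nonneg _) (Real.exp_nonneg _)
        _ ≤ Real.exp (K₂ * K) * (2 * K) * |B a - B D| := by
            rw [abs_mul, abs_sub_comm (B D)]
            have : |B a - B D| * |L t| ≤ |B a - B D| * K :=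
              mul_le_mul_of_nonneg_left hLt (abs_nonneg _)
            nlinarith [Real.exp_pos (K₂ * K), abs_nonneg (B a - B D)]
    calc ‖A a * Real.exp (-(B a) * L t) - A D * Real.exp (-(B D) * L t)‖
        = |(A a - A D) * Real.exp (-(B a) * L t)
          + A D * (Real.exp (-(B a) * L t) - Real.exp (-(B D) * L t))| := by
          rw [Real.norm_eq_abs, key]
      _ ≤ |(A a - A D) * Real.exp (-(B a) * L t)|
          + |A D * (Real.exp (-(B a) * L t) - Real.exp (-(B D) * L t))| := abs_add_le _ _
      _ ≤ c₁ * |A a - A D| + c₂ * |B a - B D| := by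
          rw [abs_mul, abs_mul, Real.abs_exp]
          refine add_le_add ?_ ?_
          · rw [mul_comm c₁]
            exact mul_le_mul_of_nonneg_left hexpa (abs_nonneg _)
          · calc |A D| * |Real.exp (-(B a) * L t) - Real.exp (-(B D) * L t)|
                ≤ |A D| * (Real.exp (K₂ * K) * (2 * K) * |B a - B D|) :=
                  mul_le_mul_of_nonneg_left hdiffexp (abs_nonneg _)
              _ = c₂ * |B a - B D| := by rw [hc₂def]; ring
  have hInt := intervalIntegral.norm_integral_le_of_norm_le_const hbound
  refine hInt.trans ?_
  have h1 : c₁ * |A a - A D| + c₂ * |B a - B D| ≤ c := by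
    have e1 : c₁ * |A a - A D| ≤ c₁ * (c / (2 * c₁)) :=
      mul_le_mul_of_nonneg_left (le_of_lt hAa) (le_of_lt hc₁pos)
    have e2 : c₂ * |B a - B D| ≤ c₂ * (c / (2 * (c₂ + 1))) := by
      apply mul_le_mul_of_nonneg_left _ hc₂nn
      exact le_of_lt (lt_of_lt_of_le hBa (min_le_right _ _))
    have e1' : c₁ * (c / (2 * c₁)) = c / 2 := by field_simp
    have e2' : c₂ * (c / (2 * (c₂ + 1))) ≤ c / 2 := by
      rw [← mul_div_assoc, div_le_div_iff₀ (by positivity) (by norm_num)]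
      nlinarith
    linarith
  have : ‖a - D‖ = |a - D| := rfl
  rw [this]
  calc (c₁ * |A a - A D| + c₂ * |B a - B D|) * |a - D| ≤ c * |a - D| :=
        mul_le_mul_of_nonneg_right h1 (abs_nonneg _)
    _ = c * ‖a - D‖ := rfl
/-- With `λ₀` continuous, `Q` differentiable with global minimum `Q(0) < 0`,
`H₀(x) > 0`, `0 ≤ t₀ < d₀(x) < τ` and `λ₀(d₀(x)) > 0`, the restricted mean
residual lifetime `m_{t₀}(a) = ∫_{t₀}^{τ} exp(−Λ(t; a, x) + Λ(t₀; a, x)) dt`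
is differentiable at `a = d₀(x)` with derivative
`−λ₀(d₀(x))·exp(μ₀(x))·(1 − exp(Q(0)·H₀(x)))·∫_{d₀(x)}^{τ} exp(−Λ(t; d₀(x), x) + Λ(t₀; d₀(x), x)) dt`,
which is strictly negative. -/
theorem stmt_3 {𝒳 : Type*} (τ a₀ : ℝ) (ha₀ : 0 ≤ a₀) (hτ : a₀ ≤ τ)
    (lam0 : ℝ → ℝ) (hlam_cont : Continuous lam0) (hlam_nonneg : ∀ u, 0 ≤ lam0 u)
    (μ0 H0 d0 : 𝒳 → ℝ) (hH0_nonneg : ∀ y, 0 ≤ H0 y)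
    (hd0_range : ∀ y, d0 y ∈ Set.Icc 0 a₀)
    (Q Q' : ℝ → ℝ) (hQd : ∀ u, HasDerivAt Q (Q' u) u)
    (hQmin : ∀ u, Q 0 ≤ Q u) (hQ0 : Q 0 < 0)
    (x : 𝒳) (hH : 0 < H0 x)
    (t₀ : ℝ) (ht₀ : 0 ≤ t₀) (ht₀d : t₀ < d0 x) (hdτ : d0 x < τ)
    (hlam_pos : 0 < lam0 (d0 x)) :
    HasDerivAt
      (fun a => ∫ t in t₀..τ,
        Real.exp (- cumHaz lam0 μ0 H0 d0 Q x a t + cumHaz lam0 μ0 H0 d0 Q x a t₀))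
      (-(lam0 (d0 x) * Real.exp (μ0 x) * (1 - Real.exp (Q 0 * H0 x)) *
          ∫ t in (d0 x)..τ,
            Real.exp (- cumHaz lam0 μ0 H0 d0 Q x (d0 x) t
                      + cumHaz lam0 μ0 H0 d0 Q x (d0 x) t₀)))
      (d0 x)
    ∧ (-(lam0 (d0 x) * Real.exp (μ0 x) * (1 - Real.exp (Q 0 * H0 x)) *
          ∫ t in (d0 x)..τ,
            Real.exp (- cumHaz lam0 μ0 H0 d0 Q x (d0 x) t
                      + cumHaz lam0 μ0 H0 d0 Q x (d0 x) t₀))) < 0 := by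
  
  have hDnn : 0 ≤ d0 x := (hd0_range x).1
  set D : ℝ := d0 x with hDdef
  set M : ℝ := Real.exp (μ0 x) with hMdef
  have hMpos : 0 < M := Real.exp_pos _
  set L : ℝ → ℝ := fun t => ∫ u in (0:ℝ)..t, lam0 u with hLdef
  set Efn : ℝ → ℝ := fun a => Real.exp (Q (a - D) * H0 x) with hEdef
  set B : ℝ → ℝ := fun a => M * Efn a with hBdef
  set A : ℝ → ℝ := fun a => Real.exp (M * L t₀ - M * L a + B a * L a) with hAdef
  set g : ℝ → ℝ := fun t => Real.exp (M * L t₀ - M * L t) with hgdef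
  -- derivative of L
  have hL : ∀ t, HasDerivAt L (lam0 t) t := fun t =>
    intervalIntegral.integral_hasDerivAt_right (hlam_cont.intervalIntegrable 0 t)
      hlam_cont.stronglyMeasurable.stronglyMeasurableAtFilter
      hlam_cont.continuousAt
  have Lcont : Continuous L := continuous_iff_continuousAt.2 fun t => (hL t).continuousAt
  -- Q'(0) = 0
  have hQ'0 : Q' 0 = 0 := by
    have hmin : IsLocalMin Q 0 := Filter.Eventually.of_forall hQmin
    exact hmin.hasDerivAt_eq_zero (hQd 0)
  -- derivative of Efn at D is 0
  have hq : HasDerivAt (fun a : ℝ => Q (a - D)) 0 D := by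
    have hid : HasDerivAt (fun a : ℝ => a - D) 1 D := (hasDerivAt_id D).sub_const D
    have h2 : HasDerivAt (Q ∘ fun a : ℝ => a - D) (Q' (D - D) * 1) D :=
      HasDerivAt.comp D (hQd (D - D)) hid
    simpa [Function.comp_def, sub_self, hQ'0] using h2
  have hE : HasDerivAt Efn 0 D := by
    have := (hq.mul_const (H0 x)).exp
    simpa [hEdef] using this
  have hB : HasDerivAt B 0 D := by
    have := hE.const_mul M
    simpa [hBdef] using this
  -- derivative of A at D
  have hA : HasDerivAt A (-(M * lam0 D * (1 - Efn D)) * A D) D := by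
    have hinner := ((hasDerivAt_const D (M * L t₀)).sub ((hL D).const_mul M)).add
        (hB.mul (hL D))
    have := hinner.exp
    refine this.congr_deriv ?_
    simp only [hAdef, hBdef, Pi.add_apply, Pi.sub_apply, Pi.mul_apply]
    ring
  -- continuous auxiliary integrands
  have hXcont : ∀ a, Continuous (fun t => A a * Real.exp (-(B a) * L t)) := by
    intro a; fun_prop
  have hgcont : Continuous g := by rw [hgdef]; fun_prop
  -- derivative of a ↦ ∫_D^τ exp(-(B a) L t) dt at D
  have hJB : HasDerivAt (fun a => ∫ t in D..τ, Real.exp (-(B a) * L t)) 0 D := by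
    have hJ := hasDerivAt_J Lcont D τ (B D)
    have := hJ.comp D hB
    simpa [Function.comp_def] using this
  -- assemble derivative of the reference function
  have h1 : HasDerivAt (fun a => ∫ t in t₀..a, g t) (g D) D :=
    intervalIntegral.integral_hasDerivAt_right (hgcont.intervalIntegrable _ _)
      hgcont.stronglyMeasurable.stronglyMeasurableAtFilter hgcont.continuousAt
  have h2 : HasDerivAt (fun a => ∫ t in a..τ, A D * Real.exp (-(B D) * L t))
      (-(A D * Real.exp (-(B D) * L D))) D :=
    intervalIntegral.integral_hasDerivAt_left ((hXcont D).intervalIntegrable _ _)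
      (hXcont D).stronglyMeasurable.stronglyMeasurableAtFilter
      (hXcont D).continuousAt
  have h3 : HasDerivAt
      (fun a => A a * ∫ t in D..τ, Real.exp (-(B a) * L t))
      (-(M * lam0 D * (1 - Efn D)) * A D * (∫ t in D..τ, Real.exp (-(B D) * L t))) D := by
    have := hA.mul hJB
    refine this.congr_deriv ?_
    ring
  have h4 : HasDerivAt (fun a => ∫ t in D..a,
      (A a * Real.exp (-(B a) * L t) - A D * Real.exp (-(B D) * L t))) 0 D :=
    hasDerivAt_R Lcont hA.continuousAt hB.continuousAt
  -- the reference function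
  have htilde : HasDerivAt (fun a =>
      (∫ t in t₀..a, g t) + (∫ t in a..τ, A D * Real.exp (-(B D) * L t))
      + ((A a * ∫ t in D..τ, Real.exp (-(B a) * L t))
          - (A D * ∫ t in D..τ, Real.exp (-(B D) * L t)))
      - ∫ t in D..a, (A a * Real.exp (-(B a) * L t) - A D * Real.exp (-(B D) * L t)))
      (g D + (-(A D * Real.exp (-(B D) * L D)))
        + -(M * lam0 D * (1 - Efn D)) * A D * (∫ t in D..τ, Real.exp (-(B D) * L t))) D := by
    have h3' := h3.sub_const (A D * ∫ t in D..τ, Real.exp (-(B D) * L t))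
    refine (((h1.add h2).add h3').sub h4).congr_deriv ?_
    ring
  -- g D = A D * exp(-(B D) L D)
  have hgD : g D = A D * Real.exp (-(B D) * L D) := by
    rw [hgdef, hAdef, ← Real.exp_add]
    ring_nf
  have hXint : ∀ a p q, IntervalIntegrable
      (fun t => A a * Real.exp (-(B a) * L t)) volume p q :=
    fun a p q => (hXcont a).intervalIntegrable p q
  -- the original function agrees with the reference function near D
  have heq : (fun a => ∫ t in t₀..τ,
      Real.exp (- cumHaz lam0 μ0 H0 d0 Q x a t + cumHaz lam0 μ0 H0 d0 Q x a t₀))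
      =ᶠ[𝓝 D] (fun a =>
      (∫ t in t₀..a, g t) + (∫ t in a..τ, A D * Real.exp (-(B D) * L t))
      + ((A a * ∫ t in D..τ, Real.exp (-(B a) * L t))
          - (A D * ∫ t in D..τ, Real.exp (-(B D) * L t)))
      - ∫ t in D..a, (A a * Real.exp (-(B a) * L t)
          - A D * Real.exp (-(B D) * L t))) := by
    filter_upwards [Ioo_mem_nhds ht₀d hdτ] with a ha
    obtain ⟨hat₀, haτ⟩ := ha
    have ha0 : (0:ℝ) ≤ a := le_of_lt (lt_of_le_of_lt ht₀ hat₀)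
    have hch0 : cumHaz lam0 μ0 H0 d0 Q x a t₀ = M * L t₀ :=
      cumHaz_of_le lam0 μ0 H0 d0 Q x ht₀ (le_of_lt hat₀)
    have hEqL : Set.EqOn (fun t => Real.exp (- cumHaz lam0 μ0 H0 d0 Q x a t
        + cumHaz lam0 μ0 H0 d0 Q x a t₀)) g (Set.uIcc t₀ a) := by
      intro t ht
      rw [Set.uIcc_of_le (le_of_lt hat₀)] at ht
      have h0t : (0:ℝ) ≤ t := le_trans ht₀ ht.1
      simp only [hch0, cumHaz_of_le lam0 μ0 H0 d0 Q x h0t ht.2, hgdef, hMdef, hLdef]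
      ring_nf
    have hEqR : Set.EqOn (fun t => Real.exp (- cumHaz lam0 μ0 H0 d0 Q x a t
        + cumHaz lam0 μ0 H0 d0 Q x a t₀))
        (fun t => A a * Real.exp (-(B a) * L t)) (Set.uIcc a τ) := by
      intro t ht
      rw [Set.uIcc_of_le (le_of_lt haτ)] at ht
      simp only [hch0, cumHaz_of_ge hlam_cont hlam_nonneg μ0 H0 d0 Q x ha0 ht.1,
        hAdef, hBdef, hEdef, hMdef, hLdef]
      simp only [← Real.exp_add]
      rw [Real.exp_eq_exp]
      ring
    have hintL : IntervalIntegrable (fun t => Real.exp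
        (- cumHaz lam0 μ0 H0 d0 Q x a t + cumHaz lam0 μ0 H0 d0 Q x a t₀))
        volume t₀ a :=
      (hgcont.continuousOn.congr hEqL).intervalIntegrable
    have hintR : IntervalIntegrable (fun t => Real.exp
        (- cumHaz lam0 μ0 H0 d0 Q x a t + cumHaz lam0 μ0 H0 d0 Q x a t₀))
        volume a τ :=
      ((hXcont a).continuousOn.congr hEqR).intervalIntegrable
    rw [← integral_add_adjacent_intervals hintL hintR,
      intervalIntegral.integral_congr hEqL, intervalIntegral.integral_congr hEqR]
    have hsplit1 : (∫ t in D..a, A a * Real.exp (-(B a) * L t))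
        + (∫ t in a..τ, A a * Real.exp (-(B a) * L t))
        = ∫ t in D..τ, A a * Real.exp (-(B a) * L t) :=
      integral_add_adjacent_intervals (hXint a D a) (hXint a a τ)
    have hsplit2 : (∫ t in D..a, A D * Real.exp (-(B D) * L t))
        + (∫ t in a..τ, A D * Real.exp (-(B D) * L t))
        = ∫ t in D..τ, A D * Real.exp (-(B D) * L t) :=
      integral_add_adjacent_intervals (hXint D D a) (hXint D a τ)
    have hsub : (∫ t in D..a, (A a * Real.exp (-(B a) * L t)
        - A D * Real.exp (-(B D) * L t)))
        = (∫ t in D..a, A a * Real.exp (-(B a) * L t))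
          - ∫ t in D..a, A D * Real.exp (-(B D) * L t) :=
      integral_sub (hXint a D a) (hXint D D a)
    have hc1 : A a * (∫ t in D..τ, Real.exp (-(B a) * L t))
        = ∫ t in D..τ, A a * Real.exp (-(B a) * L t) :=
      (intervalIntegral.integral_const_mul _ _).symm
    have hc2 : A D * (∫ t in D..τ, Real.exp (-(B D) * L t))
        = ∫ t in D..τ, A D * Real.exp (-(B D) * L t) :=
      (intervalIntegral.integral_const_mul _ _).symm
    have hc3 : A D * (∫ t in a..τ, Real.exp (-(B D) * L t))
        = ∫ t in a..τ, A D * Real.exp (-(B D) * L t) :=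
      (intervalIntegral.integral_const_mul _ _).symm
    rw [hc1, hc2, hsub]
    linarith
  -- identify the reference integral at D with the original one
  have hIntD : (∫ t in D..τ, Real.exp (- cumHaz lam0 μ0 H0 d0 Q x D t
      + cumHaz lam0 μ0 H0 d0 Q x D t₀))
      = A D * ∫ t in D..τ, Real.exp (-(B D) * L t) := by
    have hchD0 : cumHaz lam0 μ0 H0 d0 Q x D t₀ = M * L t₀ :=
      cumHaz_of_le lam0 μ0 H0 d0 Q x ht₀ (le_of_lt ht₀d)
    have hEqD : Set.EqOn (fun t => Real.exp (- cumHaz lam0 μ0 H0 d0 Q x D t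
        + cumHaz lam0 μ0 H0 d0 Q x D t₀))
        (fun t => A D * Real.exp (-(B D) * L t)) (Set.uIcc D τ) := by
      intro t ht
      rw [Set.uIcc_of_le (le_of_lt hdτ)] at ht
      simp only [hchD0, cumHaz_of_ge hlam_cont hlam_nonneg μ0 H0 d0 Q x hDnn ht.1,
        hAdef, hBdef, hEdef, hMdef, hLdef]
      simp only [← Real.exp_add]
      rw [Real.exp_eq_exp]
      ring
    rw [intervalIntegral.integral_congr hEqD, intervalIntegral.integral_const_mul]
  have hEfnD : Efn D = Real.exp (Q 0 * H0 x) := by simp [hEdef]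
  have hderiv : HasDerivAt (fun a => ∫ t in t₀..τ,
      Real.exp (- cumHaz lam0 μ0 H0 d0 Q x a t + cumHaz lam0 μ0 H0 d0 Q x a t₀))
      (-(lam0 D * M * (1 - Real.exp (Q 0 * H0 x)) *
        ∫ t in D..τ, Real.exp (- cumHaz lam0 μ0 H0 d0 Q x D t
          + cumHaz lam0 μ0 H0 d0 Q x D t₀))) D := by
    have := htilde.congr_of_eventuallyEq heq
    refine this.congr_deriv ?_
    rw [hIntD, hgD, ← hEfnD]
    ring
  have hpos : 0 < lam0 D * M * (1 - Real.exp (Q 0 * H0 x)) *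
      ∫ t in D..τ, Real.exp (- cumHaz lam0 μ0 H0 d0 Q x D t
        + cumHaz lam0 μ0 H0 d0 Q x D t₀) := by
    have h1 : (0:ℝ) < 1 - Real.exp (Q 0 * H0 x) := by
      have hneg : Q 0 * H0 x < 0 := mul_neg_of_neg_of_pos hQ0 hH
      have := Real.exp_lt_one_iff.2 hneg
      linarith
    have h2 : 0 < ∫ t in D..τ, Real.exp (- cumHaz lam0 μ0 H0 d0 Q x D t
        + cumHaz lam0 μ0 H0 d0 Q x D t₀) := by
      rw [hIntD]
      have hADpos : 0 < A D := Real.exp_pos _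
      have : 0 < ∫ t in D..τ, Real.exp (-(B D) * L t) := by
        apply intervalIntegral.intervalIntegral_pos_of_pos_on
        · exact Continuous.intervalIntegrable (by fun_prop) _ _
        · intro t _
          exact Real.exp_pos _
        · exact hdτ
      exact mul_pos hADpos this
    exact mul_pos (mul_pos (mul_pos hlam_pos hMpos) h1) h2
  exact ⟨hderiv, neg_lt_zero.2 hpos⟩
end

section
/- Consider the hazard model λ(t; a, x) = λ₀(t)·exp[μ₀(x) + 1{t ≥ a}·Q(a − d₀(x))·H₀(x)] with λ₀ continuous on [0, τ] and Q differentiable satisfying Q(u) ≥ Q(0) for all u and Q(0) < 0. Fix x with H₀(x) > 0 and t₀ with 0 ≤ t₀ < d₀(x) < τ, and assume λ₀(d₀(x)) > 0. Define m_{t₀}(a) = ∫_{t₀}^{τ} exp{ −Λ(t; a, x) + Λ(t₀; a, x) } dt for a ∈ (t₀, τ). Then there exists a ∈ (t₀, d₀(x)) with m_{t₀}(a) > m_{t₀}(d₀(x)); in particular, d₀(x) is not a maximizer of m_{t₀} on (t₀, τ), so the optimal rule d₀ for restricted mean residual lifetime at a₀ does not maximize the restricted mean residual lifetime at any earlier time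 t₀ < d₀(x). -/
/-!
Write `Λ₀` for the baseline cumulative hazard `∫₀ᵗ λ₀ e^{μ₀(x)}` and `E(a) = exp(Q(a − d₀(x))·H₀(x))`
for the factor by which treatment at `a` scales the hazard. Moving treatment from `d = d₀(x)` to an
earlier `a` lowers `Λ(t; a, x)` by `(1 − E a)(Λ₀ t − Λ₀ a) ≥ 0` for `a ≤ t ≤ d` (as `E a < 1` for
`a` near `d`), and for `t ≥ d` changes it by `(E a − E d)(Λ₀ t − Λ₀ d) − (1 − E a)(Λ₀ d − Λ₀ a)`. Since `Q'(0) = 0`, the first term is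
`o(d − a)`, while `λ₀(d) > 0` and `E d < 1` make the second of exact order `d − a`. So for `a`
close to `d` the survival curve improves on `[t₀, τ]`, strictly after `d`, and so does `m_{t₀}`.
-/

open MeasureTheory

open Filter Set Real intervalIntegral Topology

theorem HasDerivAt.eventually_lt_nhdsLT {f : ℝ → ℝ} {f' x : ℝ} (hf : HasDerivAt f f' x)
    (hf' : 0 < f') : ∀ᶠ y in 𝓝[<] x, f y < f x := by
  filter_upwards [(hf.tendsto_slope.mono_left (nhdsLT_le_nhdsNE x)).eventually
    (eventually_gt_nhds hf'), self_mem_nhdsWithin] with y hslope hy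
  exact (slope_pos_iff_of_le hy.le).1 (slope_comm f x y ▸ hslope)

theorem IsLocalMin.hasDerivAt_exp_mul_comp_sub {Q : ℝ → ℝ} {Q' : ℝ} (hmin : IsLocalMin Q 0)
    (hQ : HasDerivAt Q Q' 0) (d k : ℝ) : HasDerivAt (fun b => exp (Q (b - d) * k)) 0 d := by
  rw [hmin.hasDerivAt_eq_zero hQ] at hQ
  have hQd : HasDerivAt (fun b => Q (b - d)) 0 d := HasDerivAt.comp_sub_const d d (by simpa using hQ)
  simpa using (hQd.mul_const k).exp

theorem exists_mem_Ioo_lt_one_and_mul_lt {E Λ₀ : ℝ → ℝ} {t₀ d p : ℝ} (J : ℝ) (ht₀ : t₀ < d)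
    (hE : HasDerivAt E 0 d) (hEd : E d < 1) (hΛ₀ : HasDerivAt Λ₀ p d) (hp : 0 < p) :
    ∃ a ∈ Ioo t₀ d, E a < 1 ∧ (E a - E d) * J < (1 - E a) * (Λ₀ d - Λ₀ a) := by
  set G : ℝ → ℝ := fun b => (E b - E d) * J - (1 - E b) * (Λ₀ d - Λ₀ b)
  have hG : HasDerivAt G ((1 - E d) * p) d := by
    have h := ((hE.sub_const (E d)).mul_const J).fun_sub
      (((hasDerivAt_const d 1).fun_sub hE).fun_mul ((hasDerivAt_const d (Λ₀ d)).fun_sub hΛ₀))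
    exact h.congr_deriv (by ring)
  have hE_lt : ∀ᶠ b in 𝓝[<] d, E b < 1 :=
    nhdsWithin_le_nhds (hE.continuousAt.eventually (eventually_lt_nhds hEd))
  obtain ⟨a, haG, hEa, ha⟩ :=
    ((hG.eventually_lt_nhdsLT (mul_pos (sub_pos.2 hEd) hp)).and
      (hE_lt.and (Ioo_mem_nhdsLT ht₀))).exists
  refine ⟨a, ha, hEa, ?_⟩
  simpa [G] using haG

noncomputable def treatedCumHaz (Λ₀ : ℝ → ℝ) (e a t : ℝ) : ℝ :=
  if t ≤ a then Λ₀ t else Λ₀ a + e * (Λ₀ t - Λ₀ a)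

namespace treatedCumHaz

variable {Λ₀ : ℝ → ℝ} {e a : ℝ}

theorem of_le {t : ℝ} (h : t ≤ a) : treatedCumHaz Λ₀ e a t = Λ₀ t := if_pos h

theorem continuous (hΛ₀ : Continuous Λ₀) : Continuous (treatedCumHaz Λ₀ e a) :=
  Continuous.if_le hΛ₀ (by fun_prop) continuous_id continuous_const fun t ht => by simp [ht]

variable {e' d τ : ℝ}

theorem le_of_mul_le (hΛ₀ : Monotone Λ₀) (had : a ≤ d) (he : e ≤ 1) (he' : e' ≤ e)
    (hgap : (e - e') * (Λ₀ τ - Λ₀ d) ≤ (1 - e) * (Λ₀ d - Λ₀ a)) {t : ℝ} (ht : t ≤ τ) :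
    treatedCumHaz Λ₀ e a t ≤ treatedCumHaz Λ₀ e' d t := by
  unfold treatedCumHaz
  split_ifs with hta htd htd
  · exact le_rfl
  · exact absurd (hta.trans had) htd
  · nlinarith [mul_nonneg (sub_nonneg.2 he) (sub_nonneg.2 (hΛ₀ (not_le.1 hta).le))]
  · nlinarith [mul_le_mul_of_nonneg_left (hΛ₀ ht) (sub_nonneg.2 he')]

theorem lt_of_mul_lt (had : a ≤ d) (hdτ : d < τ)
    (hgap : (e - e') * (Λ₀ τ - Λ₀ d) < (1 - e) * (Λ₀ d - Λ₀ a)) :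
    treatedCumHaz Λ₀ e a τ < treatedCumHaz Λ₀ e' d τ := by
  rw [treatedCumHaz, treatedCumHaz, if_neg (by linarith), if_neg hdτ.not_ge]
  linarith

end treatedCumHaz

noncomputable def restrictedMeanResidual (Λ : ℝ → ℝ) (t₀ τ : ℝ) : ℝ :=
  ∫ t in t₀..τ, exp (-Λ t + Λ t₀)

theorem restrictedMeanResidual_lt {Λ Λ' : ℝ → ℝ} {t₀ τ : ℝ} (hΛ : Continuous Λ)
    (hΛ' : Continuous Λ') (hτ : t₀ < τ) (h₀ : Λ t₀ = Λ' t₀) (hle : ∀ t ∈ Ioc t₀ τ, Λ t ≤ Λ' t)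
    (hlt : Λ τ < Λ' τ) :
    restrictedMeanResidual Λ' t₀ τ < restrictedMeanResidual Λ t₀ τ :=
  integral_lt_integral_of_continuousOn_of_le_of_exists_lt hτ (by fun_prop) (by fun_prop)
    (fun t ht => exp_le_exp.2 (by linarith [hle t ht]))
    ⟨τ, right_mem_Icc.2 hτ.le, exp_lt_exp.2 (by linarith)⟩

theorem intervalIntegrable_mul_exp_add_ite {f : ℝ → ℝ} (hf : Continuous f) (c k b p q : ℝ) :
    IntervalIntegrable (fun u => f u * exp (c + if b ≤ u then k else 0)) volume p q := by
  refine IntervalIntegrable.continuousOn_mul ?_ hf.continuousOn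
  rcases le_total 0 k with hk | hk
  · refine Monotone.intervalIntegrable fun u v huv => exp_le_exp.2 (add_le_add_right ?_ c)
    split_ifs <;> linarith
  · refine Antitone.intervalIntegrable fun u v huv => exp_le_exp.2 (add_le_add_right ?_ c)
    split_ifs <;> linarith

theorem cumHaz_eq_treatedCumHaz {𝒳 : Type*} {lam0 : ℝ → ℝ} (hlam : Continuous lam0)
    (μ0 H0 d0 : 𝒳 → ℝ) (Q : ℝ → ℝ) (x : 𝒳) {b : ℝ} (hb : 0 ≤ b) :
    cumHaz lam0 μ0 H0 d0 Q x b =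
      treatedCumHaz (fun t => ∫ u in 0..t, lam0 u * exp (μ0 x)) (exp (Q (b - d0 x) * H0 x)) b := by
  funext t
  set k := Q (b - d0 x) * H0 x
  have hbefore : ∀ s ≤ b, ∫ u in 0..s, lam0 u * exp (μ0 x + if b ≤ u then k else 0) =
      ∫ u in 0..s, lam0 u * exp (μ0 x) := by
    intro s hs
    refine integral_congr_ae ?_
    filter_upwards [volume.ae_ne b] with u hub hu
    have hub' : ¬ b ≤ u := fun h => hub ((hu.2.trans (max_le hb hs)).antisymm h)
    rw [if_neg hub', add_zero]
  have hφ : Continuous fun u => lam0 u * exp (μ0 x) := by fun_prop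
  have hint := intervalIntegrable_mul_exp_add_ite hlam (μ0 x) k b
  rw [cumHaz, treatedCumHaz]
  split_ifs with htb
  · exact hbefore t htb
  · rw [← integral_add_adjacent_intervals (hint 0 b) (hint b t), hbefore b le_rfl,
      integral_interval_sub_left (hφ.intervalIntegrable _ _) (hφ.intervalIntegrable _ _),
      ← intervalIntegral.integral_const_mul]
    congr 1
    refine integral_congr fun u hu => ?_
    rw [uIcc_of_le (not_le.1 htb).le] at hu
    simp only [if_pos hu.1, exp_add]
    ring

theorem stmt_4_general {𝒳 : Type*} (τ : ℝ)
    (lam0 : ℝ → ℝ) (hlam_cont : Continuous lam0) (hlam_nonneg : ∀ u, 0 ≤ lam0 u)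
    (μ0 H0 d0 : 𝒳 → ℝ)
    (Q Q' : ℝ → ℝ) (hQd : ∀ u, HasDerivAt Q (Q' u) u)
    (hQmin : ∀ u, Q 0 ≤ Q u) (hQ0 : Q 0 < 0)
    (x : 𝒳) (hH : 0 < H0 x)
    (t₀ : ℝ) (ht₀ : 0 ≤ t₀) (ht₀d : t₀ < d0 x) (hdτ : d0 x < τ)
    (hlam_pos : 0 < lam0 (d0 x)) :
    ∃ a ∈ Set.Ioo t₀ (d0 x),
      (∫ t in t₀..τ,
        Real.exp (- cumHaz lam0 μ0 H0 d0 Q x (d0 x) t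
                  + cumHaz lam0 μ0 H0 d0 Q x (d0 x) t₀))
      < ∫ t in t₀..τ,
          Real.exp (- cumHaz lam0 μ0 H0 d0 Q x a t + cumHaz lam0 μ0 H0 d0 Q x a t₀) := by
  set D := d0 x
  set Λ₀ : ℝ → ℝ := fun t => ∫ u in 0..t, lam0 u * exp (μ0 x)
  set E : ℝ → ℝ := fun b => exp (Q (b - D) * H0 x)
  have hφ : Continuous fun u => lam0 u * exp (μ0 x) := by fun_prop
  have hΛ₀ : ∀ t, HasDerivAt Λ₀ (lam0 t * exp (μ0 x)) t := fun t =>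
    (hφ.integral_hasStrictDerivAt 0 t).hasDerivAt
  have hΛ₀_mono : Monotone Λ₀ := monotone_of_hasDerivAt_nonneg hΛ₀ fun t =>
    mul_nonneg (hlam_nonneg t) (exp_pos _).le
  have hΛ₀_cont : Continuous Λ₀ := continuous_iff_continuousAt.2 fun t => (hΛ₀ t).continuousAt
  have hE : HasDerivAt E 0 D :=
    IsLocalMin.hasDerivAt_exp_mul_comp_sub (Eventually.of_forall hQmin) (hQd 0) D (H0 x)
  have hED : E D < 1 := by
    simpa only [E, sub_self] using exp_lt_one_iff.2 (mul_neg_of_neg_of_pos hQ0 hH)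
  obtain ⟨a, ⟨ht₀a, haD⟩, hEa, hgap⟩ := exists_mem_Ioo_lt_one_and_mul_lt (Λ₀ τ - Λ₀ D) ht₀d hE
    hED (hΛ₀ D) (mul_pos hlam_pos (exp_pos _))
  have hEDa : E D ≤ E a :=
    exp_le_exp.2 (mul_le_mul_of_nonneg_right (by simpa using hQmin (a - D)) hH.le)
  refine ⟨a, ⟨ht₀a, haD⟩, ?_⟩
  change restrictedMeanResidual (cumHaz lam0 μ0 H0 d0 Q x D) t₀ τ <
    restrictedMeanResidual (cumHaz lam0 μ0 H0 d0 Q x a) t₀ τ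
  rw [cumHaz_eq_treatedCumHaz hlam_cont _ _ _ _ _ (ht₀.trans ht₀a.le),
    cumHaz_eq_treatedCumHaz hlam_cont _ _ _ _ _ (ht₀.trans ht₀d.le)]
  refine restrictedMeanResidual_lt (treatedCumHaz.continuous hΛ₀_cont)
    (treatedCumHaz.continuous hΛ₀_cont) (ht₀d.trans hdτ) ?_
    (fun t ht => treatedCumHaz.le_of_mul_le hΛ₀_mono haD.le hEa.le hEDa hgap.le ht.2)
    (treatedCumHaz.lt_of_mul_lt haD.le hdτ hgap)
  rw [treatedCumHaz.of_le ht₀a.le, treatedCumHaz.of_le ht₀d.le]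

/-- With `λ₀` continuous, `Q` differentiable with global minimum `Q(0) < 0`,
`H₀(x) > 0`, `0 ≤ t₀ < d₀(x) < τ` and `λ₀(d₀(x)) > 0`, the rule `d₀` does not
maximize the restricted mean residual lifetime
`m_{t₀}(a) = ∫_{t₀}^{τ} exp(−Λ(t; a, x) + Λ(t₀; a, x)) dt` at the earlier
time `t₀ < d₀(x)`: there is `a ∈ (t₀, d₀(x))` with `m_{t₀}(a) > m_{t₀}(d₀(x))`. -/
theorem stmt_4 {𝒳 : Type*} (τ a₀ : ℝ) (ha₀ : 0 ≤ a₀) (hτ : a₀ ≤ τ)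
    (lam0 : ℝ → ℝ) (hlam_cont : Continuous lam0) (hlam_nonneg : ∀ u, 0 ≤ lam0 u)
    (μ0 H0 d0 : 𝒳 → ℝ) (hH0_nonneg : ∀ y, 0 ≤ H0 y)
    (hd0_range : ∀ y, d0 y ∈ Set.Icc 0 a₀)
    (Q Q' : ℝ → ℝ) (hQd : ∀ u, HasDerivAt Q (Q' u) u)
    (hQmin : ∀ u, Q 0 ≤ Q u) (hQ0 : Q 0 < 0)
    (x : 𝒳) (hH : 0 < H0 x)
    (t₀ : ℝ) (ht₀ : 0 ≤ t₀) (ht₀d : t₀ < d0 x) (hdτ : d0 x < τ)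
    (hlam_pos : 0 < lam0 (d0 x)) :
    ∃ a ∈ Set.Ioo t₀ (d0 x),
      (∫ t in t₀..τ,
        Real.exp (- cumHaz lam0 μ0 H0 d0 Q x (d0 x) t
                  + cumHaz lam0 μ0 H0 d0 Q x (d0 x) t₀))
      < ∫ t in t₀..τ,
          Real.exp (- cumHaz lam0 μ0 H0 d0 Q x a t + cumHaz lam0 μ0 H0 d0 Q x a t₀) :=
  stmt_4_general τ lam0 hlam_cont hlam_nonneg μ0 H0 d0 Q Q' hQd hQmin hQ0 x hH t₀ ht₀ ht₀d hdτ
    hlam_pos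
end

section
/- Let (Ω, ℱ, P) be a probability space, let xₙ : Ω → ℝ^p be measurable random vectors and x₀ ∈ ℝ^p, let yₙ : Ω → ℝ be random variables and y₀ ∈ ℝ. Let cₙ, dₙ be positive reals with cₙ/dₙ → 0 and dₙ → ∞. Assume: (i) cₙ(xₙ − x₀) converges in distribution to a centered Gaussian random vector with covariance matrix Σ₁; (ii) dₙ(yₙ − y₀) converges in distribution to a centered normal random variable with variance σ₂²; (iii) there exists ε > 0 such that |yₙ(ω)| ≥ ε almost surely for every n, and |y₀| ≥ ε. Then cₙ(xₙ/yₙ − x₀/y₀) − cₙ(xₙ − x₀)/y₀ converges to 0 in probability; that is, cₙ(xₙ/yₙ − x₀/y₀) = cₙ(xₙ − x₀)/y₀ + o_P(1). -/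
/-!
Weakly convergent sequences of laws on a Polish space are tight (Prokhorov), so
`Vₙ = cₙ(xₙ - x₀)` and `Wₙ = dₙ(yₙ - y₀)` are bounded in probability. The remainder equals
`Aₙ • Bₙ` with `Aₙ = dₙ(y₀ - yₙ)/(yₙy₀)`, which is `O_P(1)` because `|Aₙ| ≤ |Wₙ|/ε²`, and
`Bₙ = Vₙ/dₙ + (cₙ/dₙ)x₀ = o_P(1)`; finally `O_P(1) · o_P(1) = o_P(1)`.
-/

open MeasureTheory Filter Matrix ProbabilityTheory Set
open scoped Topology ENNReal

namespace MeasureTheory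

variable {Ω ι E : Type*} {mΩ : MeasurableSpace Ω} {μ : Measure Ω} {l : Filter ι}

/-- `X i = O_P(1)` uniformly in `i`. -/
def BoundedInProbability [Norm E] (μ : Measure Ω) (X : ι → Ω → E) : Prop :=
  Tendsto (fun r : ℝ => ⨆ i, μ {ω | r < ‖X i ω‖}) atTop (𝓝 0)

section Norm

variable [Norm E] {X : ι → Ω → E}

lemma BoundedInProbability.eventually_measure_lt_norm_le (hX : BoundedInProbability μ X)
    {η : ℝ≥0∞} (hη : 0 < η) : ∀ᶠ r in atTop, ∀ i, μ {ω | r < ‖X i ω‖} ≤ η :=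
  (hX.eventually (eventually_le_nhds hη)).mono fun _ hr i => (le_iSup_of_le i le_rfl).trans hr

lemma BoundedInProbability.mono_ae {F : Type*} [Norm F] {Y : ι → Ω → F}
    (hX : BoundedInProbability μ X) {K : ℝ} (hK : 0 < K)
    (hY : ∀ i, ∀ᵐ ω ∂μ, ‖Y i ω‖ ≤ K * ‖X i ω‖) : BoundedInProbability μ Y := by
  refine tendsto_of_tendsto_of_tendsto_of_le_of_le tendsto_const_nhds
    (hX.comp (tendsto_id.atTop_div_const hK)) (fun _ => zero_le) fun r => iSup_mono fun i => ?_
  refine measure_mono_ae ?_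
  filter_upwards [hY i] with ω hω hr
  exact (div_lt_iff₀' hK).2 (lt_of_lt_of_le hr hω)

end Norm

lemma isTightMeasureSet_range_of_tendsto [MeasurableSpace E] [MetricSpace E]
    [BorelSpace E] [SecondCountableTopology E] [CompleteSpace E]
    {ν : ℕ → ProbabilityMeasure E} {ν₀ : ProbabilityMeasure E} (hν : Tendsto ν atTop (𝓝 ν₀)) :
    IsTightMeasureSet (range fun n => (ν n : Measure E)) := by
  have hK := hν.isCompact_insert_range
  have hclosure : IsCompact (closure (range ν)) :=
    hK.of_isClosed_subset isClosed_closure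
      (closure_minimal (subset_insert _ _) hK.isClosed)
  refine (isTightMeasureSet_of_isCompact_closure hclosure).subset ?_
  rintro _ ⟨n, rfl⟩
  exact ⟨ν n, mem_range_self n, rfl⟩

lemma boundedInProbability_of_tendsto_integral [NormedAddCommGroup E] [MeasurableSpace E]
    [BorelSpace E] [SecondCountableTopology E] [CompleteSpace E] [IsProbabilityMeasure μ]
    {Z : ℕ → Ω → E} (hZ : ∀ n, Measurable (Z n)) (ν : Measure E) [IsProbabilityMeasure ν]
    (hconv : ∀ f : BoundedContinuousFunction E ℝ,
      Tendsto (fun n => ∫ ω, f (Z n ω) ∂μ) atTop (𝓝 (∫ z, f z ∂ν))) :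
    BoundedInProbability μ Z := by
  let law : ℕ → ProbabilityMeasure E := fun n =>
    ⟨μ.map (Z n), Measure.isProbabilityMeasure_map (hZ n).aemeasurable⟩
  have hlaw : Tendsto law atTop (𝓝 ⟨ν, inferInstance⟩) :=
    ProbabilityMeasure.tendsto_iff_forall_integral_tendsto.2 fun f => by
      simpa [law, integral_map (hZ _).aemeasurable f.continuous.aestronglyMeasurable]
        using hconv f
  have htail := tendsto_measure_norm_gt_of_isTightMeasureSet
    (isTightMeasureSet_range_of_tendsto hlaw)
  simp only [iSup_range] at htail
  simpa [BoundedInProbability, law,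
    Measure.map_apply (hZ _) (measurableSet_lt measurable_const measurable_norm)] using htail

lemma tendstoInMeasure_const_of_tendsto [PseudoMetricSpace E] {b : ι → E} {b₀ : E}
    (hb : Tendsto b l (𝓝 b₀)) : TendstoInMeasure μ (fun i _ => b i) l (fun _ => b₀) := by
  rw [tendstoInMeasure_iff_dist]
  intro δ hδ
  refine tendsto_const_nhds.congr' ?_
  filter_upwards [Metric.tendsto_nhds.1 hb δ hδ] with i hi
  simp [not_le.2 hi]

lemma TendstoInMeasure.add [SeminormedAddCommGroup E] {f f' : ι → Ω → E} {g g' : Ω → E}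
    (hf : TendstoInMeasure μ f l g) (hf' : TendstoInMeasure μ f' l g') :
    TendstoInMeasure μ (fun i ω => f i ω + f' i ω) l (fun ω => g ω + g' ω) := by
  rw [tendstoInMeasure_iff_norm] at *
  intro δ hδ
  have hsum := (hf (δ / 2) (half_pos hδ)).add (hf' (δ / 2) (half_pos hδ))
  rw [add_zero] at hsum
  refine tendsto_of_tendsto_of_tendsto_of_le_of_le tendsto_const_nhds hsum (fun _ => zero_le)
    fun i => (measure_mono fun ω hω => ?_).trans (measure_union_le _ _)
  by_contra h
  simp only [mem_union, mem_ofPred_eq, not_or, not_le] at h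
  have : ‖f i ω + f' i ω - (g ω + g' ω)‖ < δ := calc
    _ = ‖(f i ω - g ω) + (f' i ω - g' ω)‖ := by abel_nf
    _ ≤ ‖f i ω - g ω‖ + ‖f' i ω - g' ω‖ := norm_add_le _ _
    _ < δ := by linarith
  exact (not_le.2 this) hω

section Smul

variable {𝕜 : Type*} [NormedField 𝕜] [SeminormedAddCommGroup E] [NormedSpace 𝕜 E]

lemma BoundedInProbability.tendstoInMeasure_smul_of_tendsto {a : ι → 𝕜} {X : ι → Ω → E}
    (hX : BoundedInProbability μ X) (ha : Tendsto a l (𝓝 0)) :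
    TendstoInMeasure μ (fun i ω => a i • X i ω) l 0 := by
  simp only [tendstoInMeasure_iff_norm, Pi.zero_apply, sub_zero]
  intro δ hδ
  refine ENNReal.tendsto_nhds_zero.2 fun η hη => ?_
  obtain ⟨M, hM, hM0⟩ := ((hX.eventually_measure_lt_norm_le hη).and (eventually_gt_atTop 0)).exists
  filter_upwards [(tendsto_norm_zero.comp ha).eventually (eventually_lt_nhds (div_pos hδ hM0))]
    with i hi
  refine (measure_mono fun ω hω => ?_).trans (hM i)
  by_contra h
  simp only [mem_ofPred_eq, not_lt] at h hω
  have : ‖a i • X i ω‖ < δ := calc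
    ‖a i • X i ω‖ = ‖a i‖ * ‖X i ω‖ := norm_smul _ _
    _ ≤ ‖a i‖ * M := by gcongr
    _ < δ := (lt_div_iff₀ hM0).1 hi
  exact (not_le.2 this) hω

lemma BoundedInProbability.tendstoInMeasure_smul {A : ι → Ω → 𝕜} {B : ι → Ω → E}
    (hA : BoundedInProbability μ A) (hB : TendstoInMeasure μ B l 0) :
    TendstoInMeasure μ (fun i ω => A i ω • B i ω) l 0 := by
  rw [tendstoInMeasure_iff_norm] at *
  simp only [Pi.zero_apply, sub_zero] at hB ⊢
  intro δ hδ
  refine ENNReal.tendsto_nhds_zero.2 fun η hη => ?_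
  obtain ⟨M, hM, hM0⟩ := ((hA.eventually_measure_lt_norm_le (ENNReal.half_pos hη.ne')).and
    (eventually_gt_atTop 0)).exists
  filter_upwards [ENNReal.tendsto_nhds_zero.1 (hB (δ / M) (div_pos hδ hM0)) (η / 2)
    (ENNReal.half_pos hη.ne')] with i hi
  calc μ {ω | δ ≤ ‖A i ω • B i ω‖}
      ≤ μ ({ω | M < ‖A i ω‖} ∪ {ω | δ / M ≤ ‖B i ω‖}) := by
        refine measure_mono fun ω hω => ?_
        by_contra h
        simp only [mem_union, mem_ofPred_eq, not_or, not_lt, not_le] at h hω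
        have : ‖A i ω • B i ω‖ < δ := calc
          ‖A i ω • B i ω‖ = ‖A i ω‖ * ‖B i ω‖ := norm_smul _ _
          _ ≤ M * ‖B i ω‖ := by gcongr; exact h.1
          _ < δ := (lt_div_iff₀' hM0).1 h.2
        exact (not_le.2 this) hω
    _ ≤ η / 2 + η / 2 := (measure_union_le _ _).trans (add_le_add (hM i) hi)
    _ = η := ENNReal.add_halves η

end Smul

end MeasureTheory

lemma abs_div_mul_le_inv_sq_mul_abs {ε a u v : ℝ} (hε : 0 < ε) (hu : ε ≤ |u|) (hv : ε ≤ |v|) :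
    |a / (u * v)| ≤ (ε ^ 2)⁻¹ * |a| := by
  have huv : ε ^ 2 ≤ |u * v| := by
    rw [abs_mul, sq]
    exact mul_le_mul hu hv hε.le (abs_nonneg u)
  rw [abs_div, div_eq_inv_mul]
  gcongr

-- Both sides equal `(c (y₀ - y) / (y y₀)) • x`.
lemma smul_div_sub_div_sub_inv_smul_eq {K V : Type*} [Field K] [AddCommGroup V] [Module K V]
    {c d y y₀ : K} (x x₀ : V) (hd : d ≠ 0) (hy : y ≠ 0) (hy₀ : y₀ ≠ 0) :
    c • (y⁻¹ • x - y₀⁻¹ • x₀) - y₀⁻¹ • (c • (x - x₀)) =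
      (d * (y₀ - y) / (y * y₀)) • (d⁻¹ • (c • (x - x₀)) + (c / d) • x₀) := by
  match_scalars <;> field_simp; ring

theorem stmt_5_general {Ω : Type*} [MeasurableSpace Ω] (P : Measure Ω) [IsProbabilityMeasure P]
    (p : ℕ) (x : ℕ → Ω → Fin p → ℝ) (x₀ : Fin p → ℝ)
    (y : ℕ → Ω → ℝ) (y₀ : ℝ)
    (hxm : ∀ n, Measurable (x n)) (hym : ∀ n, Measurable (y n))
    (c d : ℕ → ℝ)
    (hcd : Tendsto (fun n => c n / d n) atTop (𝓝 0))
    (hdtop : Tendsto d atTop atTop)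
    (σ₂sq : NNReal)
    (μ₁ : Measure (Fin p → ℝ)) [IsProbabilityMeasure μ₁]
    (hxconv : ∀ f : BoundedContinuousFunction (Fin p → ℝ) ℝ,
      Tendsto (fun n => ∫ ω, f (c n • (x n ω - x₀)) ∂P) atTop (𝓝 (∫ z, f z ∂μ₁)))
    (hyconv : ∀ f : BoundedContinuousFunction ℝ ℝ,
      Tendsto (fun n => ∫ ω, f (d n * (y n ω - y₀)) ∂P) atTop
        (𝓝 (∫ z, f z ∂(gaussianReal 0 σ₂sq))))
    (ε : ℝ) (hε : 0 < ε) (hyn : ∀ n, ∀ᵐ ω ∂P, ε ≤ |y n ω|) (hy₀ : ε ≤ |y₀|) :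
    TendstoInMeasure P
      (fun n ω => c n • ((y n ω)⁻¹ • x n ω - y₀⁻¹ • x₀) - y₀⁻¹ • (c n • (x n ω - x₀)))
      atTop (fun _ => (0 : Fin p → ℝ)) := by
  have hne {u : ℝ} (hu : ε ≤ |u|) : u ≠ 0 := abs_pos.1 (hε.trans_le hu)
  have hV : BoundedInProbability P fun n ω => c n • (x n ω - x₀) :=
    boundedInProbability_of_tendsto_integral (fun n => ((hxm n).sub_const x₀).const_smul (c n))
      μ₁ hxconv
  have hW : BoundedInProbability P fun n ω => d n * (y n ω - y₀) :=
    boundedInProbability_of_tendsto_integral (fun n => ((hym n).sub_const y₀).const_mul (d n))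
      (gaussianReal 0 σ₂sq) hyconv
  have hA : BoundedInProbability P fun n ω => d n * (y₀ - y n ω) / (y n ω * y₀) :=
    hW.mono_ae (inv_pos.2 (pow_pos hε 2)) fun n => (hyn n).mono fun ω hω => by
      simpa only [Real.norm_eq_abs, abs_mul, abs_sub_comm y₀]
        using abs_div_mul_le_inv_sq_mul_abs (a := d n * (y₀ - y n ω)) hε hω hy₀
  have hdinv : Tendsto (fun n => (d n)⁻¹) atTop (𝓝 0) := tendsto_inv_atTop_zero.comp hdtop
  have hB := (hV.tendstoInMeasure_smul_of_tendsto hdinv).add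
    (tendstoInMeasure_const_of_tendsto (μ := P) (hcd.smul_const x₀))
  simp only [Pi.zero_apply, zero_smul, add_zero] at hB
  refine (hA.tendstoInMeasure_smul hB).congr' ?_ EventuallyEq.rfl
  filter_upwards [hdtop.eventually_ne_atTop 0] with n hdn
  filter_upwards [hyn n] with ω hω
  exact (smul_div_sub_div_sub_inv_smul_eq _ _ hdn (hne hω) (hne hy₀)).symm

/-- Slutsky-type lemma (Lemma 2, quotient form): if `cₙ(xₙ − x₀)` converges in
distribution to a centered Gaussian vector with covariance `Σ₁`, `dₙ(yₙ − y₀)`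
converges in distribution to a centered normal with variance `σ₂²`, `cₙ/dₙ → 0`,
`dₙ → ∞`, and `yₙ, y₀` are bounded away from zero, then
`cₙ(xₙ/yₙ − x₀/y₀) − cₙ(xₙ − x₀)/y₀` converges to `0` in probability. -/
theorem stmt_5 {Ω : Type*} [MeasurableSpace Ω] (P : Measure Ω) [IsProbabilityMeasure P]
    (p : ℕ) (x : ℕ → Ω → Fin p → ℝ) (x₀ : Fin p → ℝ)
    (y : ℕ → Ω → ℝ) (y₀ : ℝ)
    (hxm : ∀ n, Measurable (x n)) (hym : ∀ n, Measurable (y n))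
    (c d : ℕ → ℝ) (hc : ∀ n, 0 < c n) (hd : ∀ n, 0 < d n)
    (hcd : Tendsto (fun n => c n / d n) atTop (𝓝 0))
    (hdtop : Tendsto d atTop atTop)
    (S₁ : Matrix (Fin p) (Fin p) ℝ) (σ₂sq : NNReal)
    (μ₁ : Measure (Fin p → ℝ)) [IsProbabilityMeasure μ₁]
    (hμ₁ : ∀ v : Fin p → ℝ,
      μ₁.map (fun z => v ⬝ᵥ z) = gaussianReal 0 (Real.toNNReal (v ⬝ᵥ S₁ *ᵥ v)))
    (hxconv : ∀ f : BoundedContinuousFunction (Fin p → ℝ) ℝ,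
      Tendsto (fun n => ∫ ω, f (c n • (x n ω - x₀)) ∂P) atTop (𝓝 (∫ z, f z ∂μ₁)))
    (hyconv : ∀ f : BoundedContinuousFunction ℝ ℝ,
      Tendsto (fun n => ∫ ω, f (d n * (y n ω - y₀)) ∂P) atTop
        (𝓝 (∫ z, f z ∂(gaussianReal 0 σ₂sq))))
    (ε : ℝ) (hε : 0 < ε) (hyn : ∀ n, ∀ᵐ ω ∂P, ε ≤ |y n ω|) (hy₀ : ε ≤ |y₀|) :
    TendstoInMeasure P
      (fun n ω => c n • ((y n ω)⁻¹ • x n ω - y₀⁻¹ • x₀) - y₀⁻¹ • (c n • (x n ω - x₀)))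
      atTop (fun _ => (0 : Fin p → ℝ)) :=
  stmt_5_general P p x x₀ y y₀ hxm hym c d hcd hdtop σ₂sq μ₁ hxconv hyconv ε hε hyn hy₀
end

section
/- Let Y be a real random variable on a probability space, let a₀ ≤ τ be reals, and let w : [a₀, τ] → [0, ∞) be measurable. Then E[ ( ∫_{a₀}^{τ} 1{Y ≥ t}·w(t) dt )² ] = 2·∫_{a₀}^{τ} ∫_{a₀}^{t} P(Y ≥ t)·w(s)·w(t) ds dt. -/
/-!
Expanding the square and applying Tonelli twice turns the second moment into
`∫∫ P(Y ≥ max s t) w(s) w(t) ds dt` over the square `[a₀, τ]²`. This integrand is symmetric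
in `(s, t)` and the diagonal is Lebesgue-null, so the square contributes twice its lower
triangle `s ≤ t`, on which `max s t = t`.
-/

open MeasureTheory Set Function
open scoped ENNReal

theorem lintegral_sq_lintegral {Ω α : Type*} [MeasurableSpace Ω] [MeasurableSpace α]
    {P : Measure Ω} {μ : Measure α} [SFinite P] [SFinite μ] {f : Ω → α → ℝ≥0∞}
    (hf : Measurable (uncurry f)) :
    ∫⁻ ω, (∫⁻ t, f ω t ∂μ) ^ 2 ∂P = ∫⁻ t, ∫⁻ s, ∫⁻ ω, f ω t * f ω s ∂P ∂μ ∂μ := by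
  have hprod : Measurable fun q : (Ω × α) × α => f q.1.1 q.1.2 * f q.1.1 q.2 :=
    (hf.comp measurable_fst).mul (hf.comp (measurable_fst.fst.prodMk measurable_snd))
  calc ∫⁻ ω, (∫⁻ t, f ω t ∂μ) ^ 2 ∂P
      = ∫⁻ ω, ∫⁻ t, ∫⁻ s, f ω t * f ω s ∂μ ∂μ ∂P := by
        refine lintegral_congr fun ω => ?_
        have hfω : Measurable (f ω) := hf.comp measurable_prodMk_left
        rw [sq, ← lintegral_mul_const _ hfω]
        exact lintegral_congr fun t => (lintegral_const_mul _ hfω).symm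
    _ = ∫⁻ t, ∫⁻ ω, ∫⁻ s, f ω t * f ω s ∂μ ∂P ∂μ :=
        lintegral_lintegral_swap hprod.lintegral_prod_right'.aemeasurable
    _ = ∫⁻ t, ∫⁻ s, ∫⁻ ω, f ω t * f ω s ∂P ∂μ ∂μ := by
        refine lintegral_congr fun t => lintegral_lintegral_swap ?_
        exact ((hf.comp (measurable_fst.prodMk measurable_const)).mul hf).aemeasurable

theorem lintegral_ite_le_mul_ite_le {Ω α : Type*} [MeasurableSpace Ω] [LinearOrder α]
    [TopologicalSpace α] [ClosedIciTopology α] [MeasurableSpace α] [OpensMeasurableSpace α]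
    (P : Measure Ω) {Y : Ω → α} (hY : Measurable Y) (t s : α) (a b : ℝ≥0∞) :
    ∫⁻ ω, (if t ≤ Y ω then a else 0) * (if s ≤ Y ω then b else 0) ∂P
      = P {ω | max t s ≤ Y ω} * (a * b) := by
  have hmax : ∀ ω, (if t ≤ Y ω then a else 0) * (if s ≤ Y ω then b else 0)
      = {ω | max t s ≤ Y ω}.indicator (fun _ => a * b) ω := by
    intro ω
    by_cases ht : t ≤ Y ω <;> by_cases hs : s ≤ Y ω <;> simp [indicator, ht, hs]
  have hset : MeasurableSet {ω | max t s ≤ Y ω} := hY measurableSet_Ici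
  rw [lintegral_congr hmax, lintegral_indicator_const hset, mul_comm]

theorem lintegral_lintegral_eq_two_mul_of_symm {α : Type*} [LinearOrder α] [TopologicalSpace α]
    [OrderClosedTopology α] [SecondCountableTopology α] [MeasurableSpace α] [OpensMeasurableSpace α]
    {μ : Measure α} [SFinite μ] [NullSingletonClass μ] {G : α → α → ℝ≥0∞}
    (hG : Measurable (uncurry G)) (hsymm : ∀ t s, G t s = G s t) :
    ∫⁻ t, ∫⁻ s, G t s ∂μ ∂μ = 2 * ∫⁻ t, ∫⁻ s in Iic t, G t s ∂μ ∂μ := by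
  have hupper : ∫⁻ t, ∫⁻ s in Ioi t, G t s ∂μ ∂μ = ∫⁻ t, ∫⁻ s in Iic t, G t s ∂μ ∂μ := by
    have hlt : Measurable (uncurry fun t s => if t < s then G t s else 0) :=
      Measurable.ite (measurableSet_lt measurable_fst measurable_snd) hG measurable_const
    calc ∫⁻ t, ∫⁻ s in Ioi t, G t s ∂μ ∂μ
        = ∫⁻ t, ∫⁻ s, (if t < s then G t s else 0) ∂μ ∂μ := by
          refine lintegral_congr fun t => ?_
          simp only [← lintegral_indicator measurableSet_Ioi, indicator_apply, mem_Ioi]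
      _ = ∫⁻ s, ∫⁻ t, (if t < s then G t s else 0) ∂μ ∂μ :=
          lintegral_lintegral_swap hlt.aemeasurable
      _ = ∫⁻ s, ∫⁻ t in Iio s, G s t ∂μ ∂μ := by
          refine lintegral_congr fun s => ?_
          rw [← lintegral_indicator measurableSet_Iio]
          simp only [indicator, mem_Iio, hsymm s]
      _ = ∫⁻ t, ∫⁻ s in Iic t, G t s ∂μ ∂μ :=
          -- `Iio t` and `Iic t` differ by the null atom `{t}`
          lintegral_congr fun t => setLIntegral_congr Iio_ae_eq_Iic
  have hlower : Measurable fun t => ∫⁻ s in Iic t, G t s ∂μ := by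
    have hle : Measurable (uncurry fun t s => if s ≤ t then G t s else 0) :=
      Measurable.ite (measurableSet_le measurable_snd measurable_fst) hG measurable_const
    convert hle.lintegral_prod_right' (ν := μ) using 2 with t
    simp only [← lintegral_indicator measurableSet_Iic, indicator_apply, mem_Iic,
      uncurry_apply_pair]
  calc ∫⁻ t, ∫⁻ s, G t s ∂μ ∂μ
      = ∫⁻ t, (∫⁻ s in Iic t, G t s ∂μ) + ∫⁻ s in Ioi t, G t s ∂μ ∂μ := by
        refine lintegral_congr fun t => ?_
        rw [← compl_Iic, lintegral_add_compl _ measurableSet_Iic]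
    _ = 2 * ∫⁻ t, ∫⁻ s in Iic t, G t s ∂μ ∂μ := by
        rw [lintegral_add_left hlower, hupper, two_mul]

theorem stmt_14_general {Ω : Type*} [MeasurableSpace Ω] (P : Measure Ω) [IsProbabilityMeasure P]
    (Y : Ω → ℝ) (hY : Measurable Y) (a₀ τ : ℝ)
    (w : ℝ → ℝ) (hw : Measurable w) :
    ∫⁻ ω, (∫⁻ t in Set.Icc a₀ τ, (if t ≤ Y ω then ENNReal.ofReal (w t) else 0)) ^ 2 ∂P
      = 2 * ∫⁻ t in Set.Icc a₀ τ, ∫⁻ s in Set.Icc a₀ t,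
          P {ω | t ≤ Y ω} * ENNReal.ofReal (w s) * ENNReal.ofReal (w t) := by
  have hW : Measurable fun t => ENNReal.ofReal (w t) := ENNReal.measurable_ofReal.comp hw
  have hf : Measurable (uncurry fun ω t => if t ≤ Y ω then ENNReal.ofReal (w t) else 0) :=
    Measurable.ite (measurableSet_le measurable_snd (hY.comp measurable_fst))
      (hW.comp measurable_snd) measurable_const
  have hsurv : Antitone fun u => P {ω | u ≤ Y ω} := fun _ _ huv =>
    measure_mono fun _ hω => huv.trans hω
  have hG : Measurable (uncurry fun t s =>
      P {ω | max t s ≤ Y ω} * (ENNReal.ofReal (w t) * ENNReal.ofReal (w s))) :=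
    (hsurv.measurable.comp (measurable_fst.max measurable_snd)).mul
      ((hW.comp measurable_fst).mul (hW.comp measurable_snd))
  rw [lintegral_sq_lintegral hf]
  simp_rw [lintegral_ite_le_mul_ite_le P hY]
  rw [lintegral_lintegral_eq_two_mul_of_symm hG fun t s => by
    rw [max_comm, mul_comm (ENNReal.ofReal (w t))]]
  congr 1
  refine setLIntegral_congr_fun measurableSet_Icc fun t ht => ?_
  have hslice : Iic t ∩ Icc a₀ τ = Icc a₀ t :=
    ext fun s => ⟨fun hs => ⟨hs.2.1, hs.1⟩, fun hs => ⟨hs.2, hs.1, hs.2.trans ht.2⟩⟩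
  rw [Measure.restrict_restrict measurableSet_Iic, hslice]
  refine setLIntegral_congr_fun measurableSet_Icc fun s hs => ?_
  rw [max_eq_left hs.2]
  ring

/-- Second moment of a weighted occupation integral: for a real random variable
`Y`, reals `a₀ ≤ τ` and a measurable weight `w : [a₀, τ] → [0, ∞)`,
`E[(∫_{a₀}^{τ} 1{Y ≥ t}·w(t) dt)²]
  = 2·∫_{a₀}^{τ} ∫_{a₀}^{t} P(Y ≥ t)·w(s)·w(t) ds dt`,
with both sides allowed to be infinite. -/
theorem stmt_14 {Ω : Type*} [MeasurableSpace Ω] (P : Measure Ω) [IsProbabilityMeasure P]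
    (Y : Ω → ℝ) (hY : Measurable Y) (a₀ τ : ℝ) (ha : a₀ ≤ τ)
    (w : ℝ → ℝ) (hw : Measurable w) (hw0 : ∀ t, 0 ≤ w t) :
    ∫⁻ ω, (∫⁻ t in Set.Icc a₀ τ, (if t ≤ Y ω then ENNReal.ofReal (w t) else 0)) ^ 2 ∂P
      = 2 * ∫⁻ t in Set.Icc a₀ τ, ∫⁻ s in Set.Icc a₀ t,
          P {ω | t ≤ Y ω} * ENNReal.ofReal (w s) * ENNReal.ofReal (w t) :=
  stmt_14_general P Y hY a₀ τ w hw
end
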